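/- arXiv:2205.15566 — 2 statements merged into one kernel-verified Lean document; each statement's English description precedes it below -/
import Mathlib

section
/- Let T = σ * θ̊ * τ̇ be a Morse tile, written in its unique decomposition as the join of a closed simplex σ, an open simplex θ̊ and a closed simplex τ of non-vanishing dimension deprived of its empty face. Then for every pair of distinct vertices v1 ≠ v2 of the underlying simplex σ * θ * τ, st_{sd(T)}(v̂1) ∩ st_{sd(T)}(v̂2) = lk_{sd(T)}(v̂1) ∩ lk_{sd(T)}(v̂2), and this intersection is the image of st_{sd(lk_T(v1))}(v̂2) in lk_{sd(T)}(v̂1) (resp. of st_{sd(lk_T(v2))}(v̂1) in lk_{sd(T)}(v̂2)) under the isomorphism sd(lk_T(v1)) → lk_{sd(T)}(v̂1) induced by λ ↦ v1 * λ (resp. sd(lk_T(v2)) → lk_{sd(T)}(v̂2) induced by λ ↦ v2 * λ). -/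
/-!
Common combinatorial framework for Morse shellings of simplicial complexes,
following J.-Y. Welschinger, "Morse shellings out of discrete Morse functions".
-/

namespace MorseShelling

variable {V : Type*} [DecidableEq V] {W : Type*} [DecidableEq W]

/-- A (finite, combinatorial) simplicial complex: a downward-closed collection of
finite subsets (simplices) of the vertex type. -/
def IsComplex (K : Finset (Finset V)) : Prop :=
  ∀ σ ∈ K, ∀ τ ⊆ σ, τ ∈ K

/-- A relative simplicial complex `S = K \ L`, recorded as the pair `(K, L)`. -/
structure RelCplx (V : Type*) where
  K : Finset (Finset V)
  L : Finset (Finset V)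

/-- The faces of a relative simplicial complex. -/
def RelCplx.faces (S : RelCplx V) : Finset (Finset V) := S.K \ S.L

/-- Validity of a relative simplicial complex: both members are complexes and
`L` is a subcomplex of `K`. -/
def RelCplx.IsValid (S : RelCplx V) : Prop :=
  IsComplex S.K ∧ IsComplex S.L ∧ S.L ⊆ S.K

/-- Join of two collections of faces (on disjoint vertex supports). -/
def joinF (K₁ K₂ : Finset (Finset V)) : Finset (Finset V) :=
  (K₁ ×ˢ K₂).image fun p => p.1 ∪ p.2

/-- Join of two relative simplicial complexes:
`(K₁ * K₂) \ ((L₁ * K₂) ∪ (K₁ * L₂))`. -/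
def RelCplx.join (S₁ S₂ : RelCplx V) : RelCplx V :=
  ⟨joinF S₁.K S₂.K, joinF S₁.L S₂.K ∪ joinF S₁.K S₂.L⟩

/-- The star of a simplex `σ` in `K` : all faces `τ` with `σ ∪ τ ∈ K`. -/
def star (K : Finset (Finset V)) (σ : Finset V) : Finset (Finset V) :=
  K.filter fun τ => σ ∪ τ ∈ K

/-- The link of a simplex `σ` in `K` : all faces `τ` of the star disjoint from `σ`. -/
def link (K : Finset (Finset V)) (σ : Finset V) : Finset (Finset V) :=
  K.filter fun τ => σ ∪ τ ∈ K ∧ σ ∩ τ = ∅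

/-- The star of a simplex in a relative complex, `st_S(σ) = st_K(σ) \ st_L(σ)`. -/
def RelCplx.starR (S : RelCplx V) (σ : Finset V) : RelCplx V :=
  ⟨star S.K σ, star S.L σ⟩

/-- The link of a simplex in a relative complex, `lk_S(σ) = lk_K(σ) \ lk_L(σ)`. -/
def RelCplx.linkR (S : RelCplx V) (σ : Finset V) : RelCplx V :=
  ⟨link S.K σ, link S.L σ⟩

/-- The boundary complex of a simplex: all its proper faces (including `∅`). -/
def boundary (σ : Finset V) : Finset (Finset V) := σ.powerset.erase σ

/-- First barycentric subdivision: the faces are the (possibly empty) flags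
`∅ ≠ σ₀ ⊊ σ₁ ⊊ ... ⊊ σ_q` of nonempty faces of `K`, a nonempty face `σ` of `K`
becoming the vertex `σ̂ = σ`. By convention `sd ∅ = ∅`. -/
def sd (K : Finset (Finset V)) : Finset (Finset (Finset V)) :=
  if K = ∅ then ∅ else
    (K.erase ∅).powerset.filter fun c => ∀ a ∈ c, ∀ b ∈ c, a ⊆ b ∨ b ⊆ a

/-- First barycentric subdivision of a relative complex: `sd (K \ L) = sd K \ sd L`. -/
def RelCplx.sdR (S : RelCplx V) : RelCplx (Finset V) := ⟨sd S.K, sd S.L⟩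

/-- An (absolute) simplicial complex seen as a relative one. -/
def toRel (K : Finset (Finset V)) : RelCplx V := ⟨K, ∅⟩

/-- The vertex support of a relative complex. -/
def suppK (S : RelCplx V) : Finset V := S.K.sup id

/-- The ridges (codimension one faces) of a simplex. -/
def ridges (σ : Finset V) : Finset (Finset V) := σ.image fun v => σ.erase v

/-- The subcomplex of the simplex `σ` consisting of the faces contained in some
member of `R`. -/
def below (σ : Finset V) (R : Finset (Finset V)) : Finset (Finset V) :=
  σ.powerset.filter fun τ => ∃ ρ ∈ R, τ ⊆ ρ

/-- The restriction set of the basic tile `σ \ R`: the face spanned by the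
vertices opposite to the missing ridges `R`. -/
def restSet (σ : Finset V) (R : Finset (Finset V)) : Finset V :=
  σ.filter fun v => σ.erase v ∈ R

/-- A basic tile of dimension `n` and order `k`: an `n`-simplex deprived of `k`
of its ridges (together with all the faces contained in them). -/
def IsBasicTile (S : RelCplx V) (n k : ℕ) : Prop :=
  ∃ σ : Finset V, σ.card = n + 1 ∧ S.K = σ.powerset ∧
    ∃ R ⊆ ridges σ, R.card = k ∧ S.L = below σ R

/-- A Morse tile of dimension `n` and order `k`: a basic tile, possibly further
deprived of a unique face of higher codimension (its Morse face). -/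
def IsMorseTile (S : RelCplx V) (n k : ℕ) : Prop :=
  ∃ σ : Finset V, σ.card = n + 1 ∧ S.K = σ.powerset ∧
    ∃ R ⊆ ridges σ, R.card = k ∧
      (S.L = below σ R ∨
        ∃ μ ⊆ σ, μ ∉ below σ R ∧ μ.card + 2 ≤ σ.card ∧
          S.L = below σ R ∪ below σ {μ})

/-- A critical tile of dimension `n` and index `k`: either a closed simplex
(index `0`), or a basic tile of order `k` deprived of its restriction set
(this includes the dotted simplex for `k = 0` and the open simplex for `k = n`). -/
def IsCriticalTile (S : RelCplx V) (n k : ℕ) : Prop :=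
  ∃ σ : Finset V, σ.card = n + 1 ∧ S.K = σ.powerset ∧
    ((k = 0 ∧ S.L = ∅) ∨
      (k ≤ n ∧ ∃ R ⊆ ridges σ, R.card = k ∧
        S.L = below σ R ∪ below σ {restSet σ R}))

/-- A closed simplex, as a tile. -/
def IsClosedSimplexTile (S : RelCplx V) : Prop :=
  ∃ σ : Finset V, S.K = σ.powerset ∧ S.L = ∅

/-- An open simplex, as a tile: deprived of its whole boundary, incl. the empty face. -/
def IsOpenSimplexTile (S : RelCplx V) : Prop :=
  ∃ σ : Finset V, σ ≠ ∅ ∧ S.K = σ.powerset ∧ S.L = σ.powerset.erase σ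

/-- The closed simplex on vertex set `σ`, as a relative complex. -/
def closedT (σ : Finset V) : RelCplx V := ⟨σ.powerset, ∅⟩

/-- The open simplex on vertex set `σ`. -/
def openT (σ : Finset V) : RelCplx V := ⟨σ.powerset, σ.powerset.erase σ⟩

/-- The closed simplex deprived of its empty face, `σ̇` (the neutral tile when
`σ = ∅`, so that empty factors may be dropped from joins). -/
def dotT (σ : Finset V) : RelCplx V := ⟨σ.powerset, if σ = ∅ then ∅ else {∅}⟩

/-- The Morse tile `σ * θ̊ * τ̇`. -/
def splitTile (σ θ τ : Finset V) : RelCplx V :=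
  (closedT σ).join ((openT θ).join (dotT τ))

/-- A tiling of a relative simplicial complex by `N` relative facets: the tiles
are relative simplices whose underlying simplices are facets, and their faces
partition the faces of `S`. -/
structure Tiling (S : RelCplx W) (N : ℕ) where
  tile : Fin N → RelCplx W
  isFacet : ∀ i, ∃ σ ∈ S.K, (∀ τ ∈ S.K, σ ⊆ τ → τ = σ) ∧ (tile i).K = σ.powerset
  subL : ∀ i, (tile i).L ⊆ (tile i).K
  disj : ∀ i j, i ≠ j → Disjoint (tile i).faces (tile j).faces
  cover : (Finset.univ : Finset (Fin N)).biUnion (fun i => (tile i).faces) = S.faces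

/-- The union of the faces of the first `p` tiles of a tiling. -/
def Tiling.prefixFaces {S : RelCplx W} {N : ℕ} (T : Tiling S N) (p : ℕ) :
    Finset (Finset W) :=
  (Finset.univ.filter fun i : Fin N => (i : ℕ) < p).biUnion fun i => (T.tile i).faces

/-- A tiling is a shelling when each of the sets of faces of `S_p = K_p \ L`
is a relative subcomplex, i.e. `L ∪ (tiles of index < p)` is a complex. -/
def Tiling.IsShelling {S : RelCplx W} {N : ℕ} (T : Tiling S N) : Prop :=
  ∀ p ≤ N, IsComplex (S.L ∪ T.prefixFaces p)

/-- A (shelled) tiling begins with a set `F` of faces when some initial segment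
of its tiles partitions exactly `F`. -/
def Tiling.BeginsWith {S : RelCplx W} {N : ℕ} (T : Tiling S N)
    (F : Finset (Finset W)) : Prop :=
  ∃ p ≤ N, T.prefixFaces p = F

/-- A Morse tiling: all tiles are Morse tiles. -/
def Tiling.IsMorse {S : RelCplx W} {N : ℕ} (T : Tiling S N) : Prop :=
  ∀ i, ∃ n k, IsMorseTile (T.tile i) n k

/-- An h-tiling: all tiles are basic or critical tiles. -/
def Tiling.IsH {S : RelCplx W} {N : ℕ} (T : Tiling S N) : Prop :=
  ∀ i, (∃ n k, IsBasicTile (T.tile i) n k) ∨ (∃ n k, IsCriticalTile (T.tile i) n k)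

/-- `f` induces a simplicial isomorphism from `A` onto `B` (both viewed through
their collections of faces). -/
def IsSimplicialIso (f : V → W) (A : Finset (Finset V)) (B : Finset (Finset W)) : Prop :=
  Set.BijOn (fun σ : Finset V => σ.image f) ↑A ↑B

/-- `f` induces an isomorphism of relative simplicial complexes. -/
def IsRelIso (f : V → W) (S : RelCplx V) (S' : RelCplx W) : Prop :=
  Set.BijOn (fun σ : Finset V => σ.image f) ↑S.K ↑S'.K ∧
    Set.BijOn (fun σ : Finset V => σ.image f) ↑S.L ↑S'.L

/-- The first derived neighborhood `N(L, K)` of a subcomplex `L` in `K` : the union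
of the stars in `sd K` of the vertices of `L`. -/
def derivedNbhd (L K : Finset (Finset V)) : Finset (Finset (Finset V)) :=
  (L.filter fun s => s.card = 1).biUnion fun s => star (sd K) {s}

/-- The faces of the derived neighborhood `N(T, S)` of a tile `T` in a relative
complex `S`: the union of the relative stars in `sd S` of the vertices of `T`. -/
def relDerivedNbhd (T S : RelCplx V) : Finset (Finset (Finset V)) :=
  ((suppK T).biUnion fun v => ((S.sdR).starR {({v} : Finset V)}).faces) ∩ (S.sdR).faces

/-- A discrete Morse function on the finite simplicial complex `K`. -/
def IsDiscreteMorse (K : Finset (Finset V)) (f : Finset V → ℝ) : Prop :=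
  ∀ σ ∈ K, σ ≠ ∅ →
    (K.filter fun τ => σ ⊂ τ ∧ f τ ≤ f σ).card ≤ 1 ∧
    (K.filter fun θ => θ ≠ ∅ ∧ θ ⊂ σ ∧ f σ ≤ f θ).card ≤ 1

/-- A critical face of a discrete Morse function. -/
def IsCriticalFace (K : Finset (Finset V)) (f : Finset V → ℝ) (σ : Finset V) : Prop :=
  σ ∈ K ∧ σ ≠ ∅ ∧ (∀ τ ∈ K, σ ⊂ τ → f σ < f τ) ∧
    ∀ θ ∈ K, θ ≠ ∅ → θ ⊂ σ → f θ < f σ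

/-- An elementary collapse: removal of a facet `τ` together with a ridge `θ` of it
contained in no other facet. -/
def ElementaryCollapse (K K' : Finset (Finset V)) : Prop :=
  ∃ τ ∈ K, ∃ θ ∈ K, θ ⊆ τ ∧ τ.card = θ.card + 1 ∧
    (∀ ρ ∈ K, τ ⊆ ρ → ρ = τ) ∧
    (∀ ρ ∈ K, θ ⊆ ρ → ρ = θ ∨ ρ = τ) ∧
    K' = (K.erase τ).erase θ

/-- A finite simplicial complex is collapsible when some finite sequence of
elementary collapses reduces it to a single vertex. -/
def Collapsible (K : Finset (Finset V)) : Prop :=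
  ∃ v : V, Relation.ReflTransGen ElementaryCollapse K {∅, {v}}


section Aux

lemma mem_joinF {K₁ K₂ : Finset (Finset V)} {a : Finset V} :
    a ∈ joinF K₁ K₂ ↔ ∃ s ∈ K₁, ∃ t ∈ K₂, s ∪ t = a := by
  simp [joinF, Finset.mem_product]; tauto

lemma isComplex_joinF {K₁ K₂ : Finset (Finset V)} (h₁ : IsComplex K₁)
    (h₂ : IsComplex K₂) : IsComplex (joinF K₁ K₂) := by
  intro a ha b hb
  obtain ⟨s, hs, t, ht, rfl⟩ := mem_joinF.1 ha
  refine mem_joinF.2 ⟨b ∩ s, h₁ s hs _ (Finset.inter_subset_right), b ∩ t,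
    h₂ t ht _ (Finset.inter_subset_right), ?_⟩
  rw [← Finset.inter_union_distrib_left]
  exact Finset.inter_eq_left.2 hb

lemma isComplex_union {K₁ K₂ : Finset (Finset V)} (h₁ : IsComplex K₁)
    (h₂ : IsComplex K₂) : IsComplex (K₁ ∪ K₂) := by
  intro a ha b hb
  rcases Finset.mem_union.1 ha with h | h
  · exact Finset.mem_union_left _ (h₁ a h b hb)
  · exact Finset.mem_union_right _ (h₂ a h b hb)

lemma isComplex_powerset (σ : Finset V) : IsComplex σ.powerset := by
  intro a ha b hb
  exact Finset.mem_powerset.2 (hb.trans (Finset.mem_powerset.1 ha))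

lemma isComplex_empty : IsComplex (∅ : Finset (Finset V)) := by
  intro a ha; simp at ha

lemma isComplex_boundary (σ : Finset V) : IsComplex (σ.powerset.erase σ) := by
  intro a ha b hb
  rw [Finset.mem_erase, Finset.mem_powerset] at ha ⊢
  refine ⟨?_, hb.trans ha.2⟩
  rintro rfl
  exact ha.1 (Finset.Subset.antisymm ha.2 hb)

lemma isComplex_dotL (τ : Finset V) :
    IsComplex (if τ = ∅ then (∅ : Finset (Finset V)) else {∅}) := by
  split_ifs
  · exact isComplex_empty
  · intro a ha b hb
    simp only [Finset.mem_singleton] at ha ⊢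
    subst ha
    exact Finset.subset_empty.1 hb

lemma joinF_powerset (A B : Finset V) :
    joinF A.powerset B.powerset = (A ∪ B).powerset := by
  ext a
  rw [mem_joinF, Finset.mem_powerset]
  constructor
  · rintro ⟨s, hs, t, ht, rfl⟩
    exact Finset.union_subset_union (Finset.mem_powerset.1 hs) (Finset.mem_powerset.1 ht)
  · intro h
    refine ⟨a ∩ A, Finset.mem_powerset.2 Finset.inter_subset_right, a ∩ B,
      Finset.mem_powerset.2 Finset.inter_subset_right, ?_⟩
    rw [← Finset.inter_union_distrib_left]
    exact Finset.inter_eq_left.2 h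

lemma splitTile_K (σ θ τ : Finset V) :
    (splitTile σ θ τ).K = (σ ∪ θ ∪ τ).powerset := by
  show joinF σ.powerset (joinF θ.powerset τ.powerset) = _
  rw [joinF_powerset, joinF_powerset, Finset.union_assoc]

lemma splitTile_L_isComplex (σ θ τ : Finset V) :
    IsComplex (splitTile σ θ τ).L := by
  show IsComplex (joinF (∅ : Finset (Finset V)) _ ∪ joinF σ.powerset _)
  exact isComplex_union
    (isComplex_joinF isComplex_empty
      (isComplex_joinF (isComplex_powerset θ) (isComplex_powerset τ)))
    (isComplex_joinF (isComplex_powerset σ)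
      (isComplex_union
        (isComplex_joinF (isComplex_boundary θ) (isComplex_powerset τ))
        (isComplex_joinF (isComplex_powerset θ) (isComplex_dotL τ))))

lemma mem_sd_iff {K : Finset (Finset V)} {c : Finset (Finset V)} :
    c ∈ sd K ↔ K ≠ ∅ ∧ (∀ a ∈ c, a ∈ K ∧ a ≠ ∅) ∧ (∀ a ∈ c, ∀ b ∈ c, a ⊆ b ∨ b ⊆ a) := by
  unfold sd
  split_ifs with h
  · simp [h]
  · simp only [Finset.mem_filter, Finset.mem_powerset, h, ne_eq, not_false_iff, true_and]
    constructor
    · rintro ⟨h1, h2⟩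
      exact ⟨fun a ha => by have := h1 ha; rw [Finset.mem_erase] at this; exact ⟨this.2, this.1⟩, h2⟩
    · rintro ⟨h1, h2⟩
      exact ⟨fun a ha => Finset.mem_erase.2 ⟨(h1 a ha).2, (h1 a ha).1⟩, h2⟩

lemma mem_star_sd {K : Finset (Finset V)} {v : V} {c : Finset (Finset V)} :
    c ∈ star (sd K) {({v} : Finset V)} ↔
      ({v} : Finset V) ∈ K ∧ (∀ a ∈ c, a ∈ K ∧ a ≠ ∅ ∧ v ∈ a) ∧
        (∀ a ∈ c, ∀ b ∈ c, a ⊆ b ∨ b ⊆ a) := by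
  rw [star, Finset.mem_filter]
  rw [show ({({v} : Finset V)} : Finset (Finset V)) ∪ c = insert {v} c from rfl,
    mem_sd_iff, mem_sd_iff]
  constructor
  · rintro ⟨⟨hK, h1, h2⟩, _, h1', h2'⟩
    refine ⟨(h1' _ (Finset.mem_insert_self _ _)).1, fun a ha => ?_, h2⟩
    have hcmp := h2' {v} (Finset.mem_insert_self _ _) a (Finset.mem_insert_of_mem ha)
    have := h1 a ha
    refine ⟨this.1, this.2, ?_⟩
    rcases hcmp with h | h
    · exact h (Finset.mem_singleton_self v)
    · rcases Finset.subset_singleton_iff.1 h with rfl | rfl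
      · exact absurd rfl this.2
      · exact Finset.mem_singleton_self v
  · rintro ⟨hv, h1, h2⟩
    have hKne : K ≠ ∅ := fun h => by simp [h] at hv
    refine ⟨⟨hKne, fun a ha => ⟨(h1 a ha).1, (h1 a ha).2.1⟩, h2⟩, hKne, ?_, ?_⟩
    · intro a ha
      rcases Finset.mem_insert.1 ha with rfl | ha
      · exact ⟨hv, by simp⟩
      · exact ⟨(h1 a ha).1, (h1 a ha).2.1⟩
    · intro a ha b hb
      rcases Finset.mem_insert.1 ha with rfl | ha <;> rcases Finset.mem_insert.1 hb with rfl | hb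
      · exact Or.inl subset_rfl
      · exact Or.inl (Finset.singleton_subset_iff.2 (h1 b hb).2.2)
      · exact Or.inr (Finset.singleton_subset_iff.2 (h1 a ha).2.2)
      · exact h2 a ha b hb

lemma mem_link_sd {K : Finset (Finset V)} {v : V} {c : Finset (Finset V)} :
    c ∈ link (sd K) {({v} : Finset V)} ↔
      c ∈ star (sd K) {({v} : Finset V)} ∧ ({v} : Finset V) ∉ c := by
  rw [link, star, Finset.mem_filter, Finset.mem_filter,
    show ({({v} : Finset V)} : Finset (Finset V)) ∩ c = ∅ ↔ ({v} : Finset V) ∉ c from by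
      simp [Finset.eq_empty_iff_forall_notMem]]
  tauto

lemma link_powerset {Δ : Finset V} {v : V} (hv : v ∈ Δ) :
    link Δ.powerset {v} = (Δ.erase v).powerset := by
  ext a
  rw [link, Finset.mem_filter, Finset.mem_powerset, Finset.mem_powerset, ← Finset.insert_eq]
  simp only [Finset.mem_powerset, Finset.insert_subset_iff, Finset.subset_erase,
    show ({v} : Finset V) ∩ a = ∅ ↔ v ∉ a from by simp [Finset.eq_empty_iff_forall_notMem]]
  tauto

lemma mem_linkL {L : Finset (Finset V)} {v : V} {a : Finset V} :
    a ∈ link L {v} ↔ a ∈ L ∧ insert v a ∈ L ∧ v ∉ a := by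
  rw [link, Finset.mem_filter, ← Finset.insert_eq,
    show ({v} : Finset V) ∩ a = ∅ ↔ v ∉ a from by simp [Finset.eq_empty_iff_forall_notMem]]

lemma main_star_eq_link (Δ : Finset V) (L : Finset (Finset V))
    (v₁ v₂ : V) (hne : v₁ ≠ v₂) :
    (star (sd Δ.powerset) {({v₁} : Finset V)} \ star (sd L) {({v₁} : Finset V)}) ∩
      (star (sd Δ.powerset) {({v₂} : Finset V)} \ star (sd L) {({v₂} : Finset V)}) =
    (link (sd Δ.powerset) {({v₁} : Finset V)} \ link (sd L) {({v₁} : Finset V)}) ∩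
      (link (sd Δ.powerset) {({v₂} : Finset V)} \ link (sd L) {({v₂} : Finset V)}) := by
  ext c
  simp only [Finset.mem_inter, Finset.mem_sdiff, mem_link_sd]
  constructor
  · rintro ⟨⟨s1, n1⟩, ⟨s2, n2⟩⟩
    have h1 := (mem_star_sd.1 s1).2.1
    have h2 := (mem_star_sd.1 s2).2.1
    have hv1 : ({v₁} : Finset V) ∉ c := fun hm => hne (Finset.mem_singleton.1 ((h2 _ hm).2.2)).symm
    have hv2 : ({v₂} : Finset V) ∉ c := fun hm => hne (Finset.mem_singleton.1 ((h1 _ hm).2.2))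
    exact ⟨⟨⟨s1, hv1⟩, fun h => n1 h.1⟩, ⟨⟨s2, hv2⟩, fun h => n2 h.1⟩⟩
  · rintro ⟨⟨⟨s1, hv1⟩, n1⟩, ⟨⟨s2, hv2⟩, n2⟩⟩
    exact ⟨⟨s1, fun h => n1 ⟨h, hv1⟩⟩, ⟨s2, fun h => n2 ⟨h, hv2⟩⟩⟩

lemma main_image (Δ : Finset V) (L : Finset (Finset V)) (hL : IsComplex L)
    (v₁ v₂ : V) (h1 : v₁ ∈ Δ) (h2 : v₂ ∈ Δ) (hne : v₁ ≠ v₂) :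
    ((star (sd Δ.powerset) {({v₁} : Finset V)} \ star (sd L) {({v₁} : Finset V)}) ∩
      (star (sd Δ.powerset) {({v₂} : Finset V)} \ star (sd L) {({v₂} : Finset V)})).erase ∅ =
    (Finset.image (Finset.image fun μ : Finset V => insert v₁ μ)
      (star (sd (link Δ.powerset {v₁})) {({v₂} : Finset V)} \
        star (sd (link L {v₁})) {({v₂} : Finset V)})).erase ∅ := by
  rw [link_powerset h1]
  ext c
  simp only [Finset.mem_erase, Finset.mem_inter, Finset.mem_sdiff, Finset.mem_image]
  constructor
  · rintro ⟨hc0, ⟨s1, n1⟩, ⟨s2, n2⟩⟩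
    refine ⟨hc0, ?_⟩
    obtain ⟨-, h1', hch⟩ := mem_star_sd.1 s1
    obtain ⟨-, h2', -⟩ := mem_star_sd.1 s2
    refine ⟨c.image fun a => a.erase v₁, ⟨?_, ?_⟩, ?_⟩
    · rw [mem_star_sd]
      refine ⟨by simp [Finset.mem_powerset, Finset.singleton_subset_iff, Finset.mem_erase,
        hne.symm, h2], ?_, ?_⟩
      · intro b hb
        obtain ⟨a, ha, rfl⟩ := Finset.mem_image.1 hb
        have hv2a : v₂ ∈ a := (h2' a ha).2.2
        have hv2b : v₂ ∈ a.erase v₁ := Finset.mem_erase.2 ⟨hne.symm, hv2a⟩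
        refine ⟨Finset.mem_powerset.2 ?_, fun h => by simp [h] at hv2b, hv2b⟩
        intro x hx
        have := Finset.mem_powerset.1 (h1' a ha).1
        exact Finset.mem_erase.2 ⟨(Finset.mem_erase.1 hx).1, this (Finset.mem_erase.1 hx).2⟩
      · intro b hb b' hb'
        obtain ⟨a, ha, rfl⟩ := Finset.mem_image.1 hb
        obtain ⟨a', ha', rfl⟩ := Finset.mem_image.1 hb'
        rcases hch a ha a' ha' with h | h
        · exact Or.inl (Finset.erase_subset_erase _ h)
        · exact Or.inr (Finset.erase_subset_erase _ h)
    · rw [mem_star_sd]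
      rintro ⟨hv2L, hmem, -⟩
      have hcL : ∀ a ∈ c, a ∈ L := by
        intro a ha
        have hv1a : v₁ ∈ a := (h1' a ha).2.2
        have := (hmem (a.erase v₁) (Finset.mem_image_of_mem _ ha)).1
        have := (mem_linkL.1 this).2.1
        rwa [Finset.insert_erase hv1a] at this
      have hv2' : ({v₂} : Finset V) ∈ L := (mem_linkL.1 hv2L).1
      exact n2 (mem_star_sd.2 ⟨hv2', fun a ha => ⟨hcL a ha, (h2' a ha).2.1, (h2' a ha).2.2⟩, hch⟩)
    · rw [Finset.image_image]
      refine Eq.trans (Finset.image_congr ?_) Finset.image_id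
      intro a ha
      exact Finset.insert_erase ((h1' a ha).2.2)
  · rintro ⟨hc0, c', ⟨s', n'⟩, rfl⟩
    obtain ⟨-, h', hch'⟩ := mem_star_sd.1 s'
    have hmemc : ∀ a ∈ c'.image fun μ : Finset V => insert v₁ μ,
        a ⊆ Δ ∧ a ≠ ∅ ∧ v₁ ∈ a ∧ v₂ ∈ a := by
      intro a ha
      obtain ⟨b, hb, rfl⟩ := Finset.mem_image.1 ha
      obtain ⟨hbP, -, hv2b⟩ := h' b hb
      have hbΔ : b ⊆ Δ.erase v₁ := Finset.mem_powerset.1 hbP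
      refine ⟨Finset.insert_subset h1 (hbΔ.trans (Finset.erase_subset _ _)), by simp,
        Finset.mem_insert_self _ _, Finset.mem_insert_of_mem hv2b⟩
    have hchain : ∀ a ∈ c'.image fun μ : Finset V => insert v₁ μ,
        ∀ b ∈ c'.image fun μ : Finset V => insert v₁ μ, a ⊆ b ∨ b ⊆ a := by
      intro a ha b hb
      obtain ⟨x, hx, rfl⟩ := Finset.mem_image.1 ha
      obtain ⟨y, hy, rfl⟩ := Finset.mem_image.1 hb
      rcases hch' x hx y hy with h | h
      · exact Or.inl (Finset.insert_subset_insert _ h)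
      · exact Or.inr (Finset.insert_subset_insert _ h)
    have hkey : ¬ ∀ a ∈ c'.image fun μ : Finset V => insert v₁ μ, a ∈ L := by
      intro hall
      apply n'
      rw [mem_star_sd]
      have hc'0 : c' ≠ ∅ := by rintro rfl; simp at hc0
      obtain ⟨b₀, hb₀⟩ := Finset.nonempty_iff_ne_empty.2 hc'0
      have hb₀L : insert v₁ b₀ ∈ L := hall _ (Finset.mem_image_of_mem _ hb₀)
      have hv12 : ({v₁, v₂} : Finset V) ∈ L := by
        apply hL _ hb₀L
        intro x hx
        rcases Finset.mem_insert.1 hx with rfl | hx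
        · exact Finset.mem_insert_self _ _
        · rw [Finset.mem_singleton] at hx; subst hx
          exact Finset.mem_insert_of_mem (h' b₀ hb₀).2.2
      refine ⟨?_, ?_, hch'⟩
      · rw [mem_linkL]
        refine ⟨hL _ hv12 _ (by intro x hx; simp at hx; simp [hx]), ?_, by simpa using hne⟩
        have : insert v₁ ({v₂} : Finset V) = {v₁, v₂} := rfl
        rw [this]; exact hv12
      · intro b hb
        have habL : insert v₁ b ∈ L := hall _ (Finset.mem_image_of_mem _ hb)
        obtain ⟨hbP, hb0, hv2b⟩ := h' b hb
        have hv1b : v₁ ∉ b := fun h => by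
          have := Finset.mem_powerset.1 hbP h; simp at this
        refine ⟨mem_linkL.2 ⟨hL _ habL _ (Finset.subset_insert _ _), habL, hv1b⟩, hb0, hv2b⟩
    refine ⟨hc0, ⟨?_, ?_⟩, ⟨?_, ?_⟩⟩
    · rw [mem_star_sd]
      exact ⟨Finset.mem_powerset.2 (Finset.singleton_subset_iff.2 h1),
        fun a ha => ⟨Finset.mem_powerset.2 (hmemc a ha).1, (hmemc a ha).2.1,
          (hmemc a ha).2.2.1⟩, hchain⟩
    · rw [mem_star_sd]
      rintro ⟨-, hmem, -⟩
      exact hkey fun a ha => (hmem a ha).1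
    · rw [mem_star_sd]
      exact ⟨Finset.mem_powerset.2 (Finset.singleton_subset_iff.2 h2),
        fun a ha => ⟨Finset.mem_powerset.2 (hmemc a ha).1, (hmemc a ha).2.1,
          (hmemc a ha).2.2.2⟩, hchain⟩
    · rw [mem_star_sd]
      rintro ⟨-, hmem, -⟩
      exact hkey fun a ha => (hmem a ha).1

end Aux

/-- **Corollary.** For distinct vertices `v₁ ≠ v₂` of the simplex underlying the
Morse tile `T = σ * θ̊ * τ̇`,
`st_{sd T}(v̂₁) ∩ st_{sd T}(v̂₂) = lk_{sd T}(v̂₁) ∩ lk_{sd T}(v̂₂)`, and this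
intersection is (on nonempty faces) the image of `st_{sd(lk_T(v₁))}(v̂₂)`
(resp. `st_{sd(lk_T(v₂))}(v̂₁)`) under the isomorphism induced by `λ ↦ v₁ * λ`
(resp. `λ ↦ v₂ * λ`). -/
theorem stars_intersection_in_sd_of_morse_tile
    {V : Type*} [DecidableEq V] (σ θ τ : Finset V)
    (h₁ : Disjoint σ θ) (h₂ : Disjoint σ τ) (h₃ : Disjoint θ τ)
    (hdim : τ = ∅ ∨ 2 ≤ τ.card) (v₁ v₂ : V)
    (hv₁ : v₁ ∈ σ ∪ θ ∪ τ) (hv₂ : v₂ ∈ σ ∪ θ ∪ τ) (hne : v₁ ≠ v₂) :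
    (((splitTile σ θ τ).sdR).starR {({v₁} : Finset V)}).faces ∩
        (((splitTile σ θ τ).sdR).starR {({v₂} : Finset V)}).faces =
      (((splitTile σ θ τ).sdR).linkR {({v₁} : Finset V)}).faces ∩
        (((splitTile σ θ τ).sdR).linkR {({v₂} : Finset V)}).faces ∧
    ((((splitTile σ θ τ).sdR).starR {({v₁} : Finset V)}).faces ∩
        (((splitTile σ θ τ).sdR).starR {({v₂} : Finset V)}).faces).erase ∅ =
      (Finset.image (Finset.image fun μ : Finset V => insert v₁ μ)
        ((((splitTile σ θ τ).linkR {v₁}).sdR.starR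
          {({v₂} : Finset V)}).faces)).erase ∅ ∧
    ((((splitTile σ θ τ).sdR).starR {({v₁} : Finset V)}).faces ∩
        (((splitTile σ θ τ).sdR).starR {({v₂} : Finset V)}).faces).erase ∅ =
      (Finset.image (Finset.image fun μ : Finset V => insert v₂ μ)
        ((((splitTile σ θ τ).linkR {v₂}).sdR.starR
          {({v₁} : Finset V)}).faces)).erase ∅ := by
  have hK := splitTile_K σ θ τ
  have hLc := splitTile_L_isComplex σ θ τ
  simp only [RelCplx.faces, RelCplx.sdR, RelCplx.starR, RelCplx.linkR] at *
  rw [hK]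
  refine ⟨main_star_eq_link _ _ _ _ hne, main_image _ _ hLc _ _ hv₁ hv₂ hne, ?_⟩
  rw [Finset.inter_comm]
  exact main_image _ _ hLc _ _ hv₂ hv₁ hne.symm

end MorseShelling
end

section
/- Let S = K \ L be a finite relative simplicial complex and let v be a vertex of K. Then sd(S) carries a Morse shelling which begins with st_{sd(S)}(v̂) = N(v, S), the derived neighborhood of v in S. -/
/-!
Order the vertices so that `v` is least. The facets of `sd S` are the flags
`{ℓ₀} ⊂ {ℓ₀, ℓ₁} ⊂ ⋯` of the enumerations `ℓ` of the facets of `S`. List these enumerations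
with those starting with `v` first, then facet by facet, then lexicographically, and let the
`i`-th tile be the `i`-th flag deprived of `sd L` and of the earlier flags. What is removed from a
flag is a union of ridges, each shared with the flag of the enumeration obtained by swapping a
descent of `ℓ`, together with at most one initial segment of the flag: the tiles are Morse tiles.
Each stage of the filtration is `sd L` plus a union of closed flags, hence a shelling, and its
first block, the flags of the enumerations starting with `v`, is the star of `v̂`.
-/

namespace MorseShelling

variable {V : Type*} [DecidableEq V] {W : Type*} [DecidableEq W]

section Flags

open Finset

variable {ℓ : List V} {k m : ℕ} {s : Finset V}

def prefixSet (ℓ : List V) (k : ℕ) : Finset V := (ℓ.take k).toFinset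

def prefixFlag (ℓ : List V) (m : ℕ) : Finset (Finset V) :=
  (range m).image fun k => prefixSet ℓ (k + 1)

def flag (ℓ : List V) : Finset (Finset V) := prefixFlag ℓ ℓ.length

theorem card_prefixSet (h : ℓ.Nodup) (hk : k ≤ ℓ.length) : (prefixSet ℓ k).card = k := by
  rw [prefixSet, List.toFinset_card_of_nodup ((List.take_sublist _ _).nodup h)]
  simp [hk]

theorem prefixSet_mono (hkm : k ≤ m) : prefixSet ℓ k ⊆ prefixSet ℓ m := by
  intro x hx
  rw [prefixSet, List.mem_toFinset, ← Nat.min_eq_left hkm, ← List.take_take] at hx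
  exact List.mem_toFinset.2 (List.take_subset _ _ hx)

theorem prefixSet_subset_toFinset : prefixSet ℓ k ⊆ ℓ.toFinset := fun _ hx =>
  List.mem_toFinset.2 (List.take_subset _ _ (List.mem_toFinset.1 hx))

theorem prefixSet_length : prefixSet ℓ ℓ.length = ℓ.toFinset := by
  rw [prefixSet, List.take_length]

theorem prefixSet_cons_succ (a : V) (ℓ : List V) (k : ℕ) :
    prefixSet (a :: ℓ) (k + 1) = insert a (prefixSet ℓ k) := by
  simp [prefixSet]

theorem prefixSet_append_of_le {ℓ₁ ℓ₂ : List V} (h : k ≤ ℓ₁.length) :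
    prefixSet (ℓ₁ ++ ℓ₂) k = prefixSet ℓ₁ k := by
  simp [prefixSet, List.take_append, Nat.sub_eq_zero_of_le h]

theorem mem_prefixFlag : s ∈ prefixFlag ℓ m ↔ ∃ k < m, prefixSet ℓ (k + 1) = s := by
  simp [prefixFlag]

theorem prefixSet_mem_prefixFlag (h1 : 1 ≤ k) (hk : k ≤ m) : prefixSet ℓ k ∈ prefixFlag ℓ m :=
  mem_prefixFlag.2 ⟨k - 1, by omega, by rw [Nat.sub_add_cancel h1]⟩

theorem prefixFlag_mono (hkm : k ≤ m) : prefixFlag ℓ k ⊆ prefixFlag ℓ m :=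
  image_subset_image (range_subset_range.2 hkm)

theorem prefixFlag_subset_flag (hm : m ≤ ℓ.length) : prefixFlag ℓ m ⊆ flag ℓ :=
  prefixFlag_mono hm

theorem prefixFlag_zero : prefixFlag ℓ 0 = ∅ := by
  simp [prefixFlag]

theorem subset_prefixSet_of_mem_prefixFlag (hs : s ∈ prefixFlag ℓ m) : s ⊆ prefixSet ℓ m := by
  obtain ⟨k, hk, rfl⟩ := mem_prefixFlag.1 hs
  exact prefixSet_mono hk

theorem subset_toFinset_of_mem_flag (hs : s ∈ flag ℓ) : s ⊆ ℓ.toFinset :=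
  (subset_prefixSet_of_mem_prefixFlag hs).trans prefixSet_length.subset

theorem ne_empty_of_mem_prefixFlag (hm : m ≤ ℓ.length) (hs : s ∈ prefixFlag ℓ m) : s ≠ ∅ := by
  obtain ⟨k, hk, rfl⟩ := mem_prefixFlag.1 hs
  obtain ⟨a, t, rfl⟩ := List.exists_cons_of_ne_nil (List.length_pos_iff.1 (by omega : 0 < ℓ.length))
  simp [prefixSet_cons_succ]

theorem prefixFlag_isChain {a b : Finset V} (ha : a ∈ prefixFlag ℓ m) (hb : b ∈ prefixFlag ℓ m) :
    a ⊆ b ∨ b ⊆ a := by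
  obtain ⟨i, -, rfl⟩ := mem_prefixFlag.1 ha
  obtain ⟨j, -, rfl⟩ := mem_prefixFlag.1 hb
  exact (le_total (i + 1) (j + 1)).imp prefixSet_mono prefixSet_mono

theorem mem_flag_iff (h : ℓ.Nodup) :
    s ∈ flag ℓ ↔ 1 ≤ s.card ∧ s.card ≤ ℓ.length ∧ prefixSet ℓ s.card = s := by
  refine ⟨fun hs => ?_, fun ⟨h1, h2, h3⟩ => h3 ▸ prefixSet_mem_prefixFlag h1 h2⟩
  obtain ⟨k, hk, rfl⟩ := mem_prefixFlag.1 hs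
  rw [card_prefixSet h hk]
  exact ⟨by omega, hk, rfl⟩

theorem mem_prefixFlag_of_mem_flag (h : ℓ.Nodup) (hs : s ∈ flag ℓ) (hm : s.card ≤ m) :
    s ∈ prefixFlag ℓ m := by
  obtain ⟨h1, -, h3⟩ := (mem_flag_iff h).1 hs
  exact h3 ▸ prefixSet_mem_prefixFlag h1 hm

theorem toFinset_mem_flag (h : ℓ ≠ []) : ℓ.toFinset ∈ flag ℓ := by
  rw [← prefixSet_length]
  exact prefixSet_mem_prefixFlag (List.length_pos_iff.2 h) le_rfl

theorem flag_subset_flag_append (ℓ₁ ℓ₂ : List V) : flag ℓ₁ ⊆ flag (ℓ₁ ++ ℓ₂) := by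
  intro s hs
  obtain ⟨k, hk, rfl⟩ := mem_prefixFlag.1 hs
  rw [← prefixSet_append_of_le (ℓ₂ := ℓ₂) hk]
  exact prefixSet_mem_prefixFlag (by omega) (by simp; omega)

theorem singleton_mem_flag_iff (h : ℓ.Nodup) {v : V} : {v} ∈ flag ℓ ↔ ℓ.head? = some v := by
  cases ℓ with
  | nil => simp [flag, prefixFlag]
  | cons a t =>
    rw [mem_flag_iff h, card_singleton, prefixSet_cons_succ]
    simp [prefixSet, eq_comm]

theorem subset_prefixFlag_sup_card (h : ℓ.Nodup) {d : Finset (Finset V)} (hd : d ⊆ flag ℓ) :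
    d ⊆ prefixFlag ℓ (d.sup card) := fun _ hs =>
  mem_prefixFlag_of_mem_flag h (hd hs) (le_sup hs)

theorem prefixSet_sup_card_mem (h : ℓ.Nodup) {d : Finset (Finset V)} (hd : d ⊆ flag ℓ)
    (hne : d.Nonempty) : prefixSet ℓ (d.sup card) ∈ d := by
  obtain ⟨s, hs, hsup⟩ := exists_mem_eq_sup d hne card
  rw [hsup, ((mem_flag_iff h).1 (hd hs)).2.2]
  exact hs

theorem prefixSet_append_cons_length (pre r : List V) (c : V) :
    prefixSet (pre ++ c :: r) (pre.length + 1) = (pre ++ [c]).toFinset := by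
  simp [prefixSet, List.take_append, List.take_of_length_le]

theorem prefixSet_swap (pre r : List V) (a b : V) (hm : m ≠ pre.length + 1) :
    prefixSet (pre ++ b :: a :: r) m = prefixSet (pre ++ a :: b :: r) m := by
  rcases le_or_gt m pre.length with h | h
  · rw [prefixSet_append_of_le h, prefixSet_append_of_le h]
  obtain ⟨j, rfl⟩ : ∃ j, m = pre.length + 2 + j := ⟨m - (pre.length + 2), by omega⟩
  simp [prefixSet, List.take_append, show pre.length + 2 + j - pre.length = j + 1 + 1 by omega,
    Finset.insert_comm]

theorem flag_erase_subset_flag_swap (pre r : List V) (a b : V) :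
    (flag (pre ++ a :: b :: r)).erase (prefixSet (pre ++ a :: b :: r) (pre.length + 1)) ⊆
      flag (pre ++ b :: a :: r) := by
  intro s hs
  obtain ⟨hne, hs⟩ := mem_erase.1 hs
  obtain ⟨k, hk, rfl⟩ := mem_prefixFlag.1 hs
  have hk' : k + 1 ≠ pre.length + 1 := fun h => hne (by rw [h])
  rw [← prefixSet_swap pre r a b hk']
  exact prefixSet_mem_prefixFlag (by omega) (by simpa using hk)

end Flags

section Subdivision

open Finset

variable {K : Finset (Finset V)} {c d : Finset (Finset V)} {ℓ : List V} {m : ℕ}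

theorem mem_sd : c ∈ sd K ↔
    K ≠ ∅ ∧ (∀ s ∈ c, s ∈ K ∧ s ≠ ∅) ∧ ∀ a ∈ c, ∀ b ∈ c, a ⊆ b ∨ b ⊆ a := by
  rw [sd]
  split_ifs with h
  · simp [h]
  · simp only [mem_filter, mem_powerset, subset_iff, mem_erase]
    grind

theorem isComplex_sd (K : Finset (Finset V)) : IsComplex (sd K) := by
  intro c hc d hd
  obtain ⟨hK, hne, hch⟩ := mem_sd.1 hc
  exact mem_sd.2 ⟨hK, fun s hs => hne s (hd hs), fun a ha b hb => hch a (hd ha) b (hd hb)⟩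

theorem empty_mem_sd (h : K ≠ ∅) : (∅ : Finset (Finset V)) ∈ sd K :=
  mem_sd.2 ⟨h, by simp, by simp⟩

theorem prefixFlag_mem_sd (hK : IsComplex K) (hm : m ≤ ℓ.length) (hmK : prefixSet ℓ m ∈ K) :
    prefixFlag ℓ m ∈ sd K :=
  mem_sd.2 ⟨ne_empty_of_mem hmK, fun _ hs =>
    ⟨hK _ hmK _ (subset_prefixSet_of_mem_prefixFlag hs), ne_empty_of_mem_prefixFlag hm hs⟩,
    fun _ ha _ hb => prefixFlag_isChain ha hb⟩

theorem exists_greatest_of_isChain {α : Type*} {𝒞 : Finset (Finset α)} (hne : 𝒞.Nonempty)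
    (hch : ∀ a ∈ 𝒞, ∀ b ∈ 𝒞, a ⊆ b ∨ b ⊆ a) : ∃ s ∈ 𝒞, ∀ t ∈ 𝒞, t ⊆ s := by
  obtain ⟨s, hs, hmax⟩ := 𝒞.exists_max_image card hne
  refine ⟨s, hs, fun t ht => ?_⟩
  rcases hch t ht s hs with h | h
  · exact h
  · exact (eq_of_subset_of_card_le h (hmax t ht)).ge

theorem exists_nodup_flag_superset (τ : Finset V) (hd : ∀ s ∈ d, s ⊆ τ ∧ s ≠ ∅)
    (hch : ∀ a ∈ d, ∀ b ∈ d, a ⊆ b ∨ b ⊆ a) :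
    ∃ ℓ : List V, ℓ.Nodup ∧ ℓ.toFinset = τ ∧ d ⊆ flag ℓ := by
  induction d using Finset.strongInduction generalizing τ with
  | H d ih =>
  rcases d.eq_empty_or_nonempty with rfl | hne
  · exact ⟨τ.toList, τ.nodup_toList, τ.toList_toFinset, empty_subset _⟩
  obtain ⟨s, hs, hmax⟩ := exists_greatest_of_isChain hne hch
  obtain ⟨ℓ₁, hn₁, rfl, hsub₁⟩ := ih (d.erase s) (erase_ssubset hs) _
    (fun t ht => ⟨hmax t (mem_of_mem_erase ht), (hd t (mem_of_mem_erase ht)).2⟩)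
    (fun a ha b hb => hch a (mem_of_mem_erase ha) b (mem_of_mem_erase hb))
  refine ⟨ℓ₁ ++ (τ \ ℓ₁.toFinset).toList, ?_, ?_, fun t ht => ?_⟩
  · refine List.nodup_append.2 ⟨hn₁, nodup_toList _, fun a ha b hb hab => ?_⟩
    rw [mem_toList, mem_sdiff] at hb
    exact hb.2 (hab ▸ List.mem_toFinset.2 ha)
  · rw [List.toFinset_append, toList_toFinset]
    exact union_sdiff_of_subset (hd _ hs).1
  · obtain rfl | hts := eq_or_ne t ℓ₁.toFinset
    · refine flag_subset_flag_append _ _ (toFinset_mem_flag fun h => (hd _ hs).2 ?_)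
      rw [h, List.toFinset_nil]
    · exact flag_subset_flag_append _ _ (hsub₁ (mem_erase.2 ⟨hts, ht⟩))

end Subdivision

section Facets

open Finset

variable {S : RelCplx V} {ℓ : List V} {s τ : Finset V} {c : Finset (Finset V)}

def RelCplx.facets (S : RelCplx V) : Finset (Finset V) :=
  S.K.filter fun τ => τ ∉ S.L ∧ ∀ τ' ∈ S.K, τ ⊆ τ' → τ' = τ

theorem RelCplx.mem_facets :
    τ ∈ S.facets ↔ τ ∈ S.K ∧ τ ∉ S.L ∧ ∀ τ' ∈ S.K, τ ⊆ τ' → τ' = τ := by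
  simp [RelCplx.facets]

theorem RelCplx.IsValid.exists_facet_superset (hS : S.IsValid) (hs : s ∈ S.K) (hsL : s ∉ S.L) :
    ∃ τ ∈ S.facets, s ⊆ τ := by
  obtain ⟨τ, hτ, hmax⟩ := (S.K.filter (s ⊆ ·)).exists_max_image card ⟨s, by simp [hs]⟩
  rw [mem_filter] at hτ
  refine ⟨τ, RelCplx.mem_facets.2 ⟨hτ.1, fun hτL => hsL (hS.2.1 τ hτL s hτ.2), ?_⟩, hτ.2⟩
  intro τ' hτ' hle
  exact (eq_of_subset_of_card_le hle (hmax τ' (mem_filter.2 ⟨hτ', hτ.2.trans hle⟩))).symm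

theorem ne_empty_of_mem_facets {v : V} (hv : {v} ∈ S.K) (hτ : τ ∈ S.facets) : τ ≠ ∅ := by
  rintro rfl
  simpa using (RelCplx.mem_facets.1 hτ).2.2 {v} hv (empty_subset _)

theorem flag_maximal (hn : ℓ.Nodup) (hτ : ℓ.toFinset ∈ S.facets) {e : Finset (Finset V)}
    (he : e ∈ sd S.K) (hle : flag ℓ ⊆ e) : e = flag ℓ := by
  obtain ⟨-, hK, hch⟩ := mem_sd.1 he
  obtain ⟨hτK, -, hτmax⟩ := RelCplx.mem_facets.1 hτ
  refine (hle.antisymm fun ν hν => ?_).symm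
  obtain ⟨hνK, hν₀⟩ := hK ν hν
  have hντ : ν ⊆ ℓ.toFinset := by
    rcases eq_or_ne ℓ [] with rfl | hℓ
    · exact (hν₀ (by simpa using hτmax ν hνK (by simp))).elim
    rcases hch ν hν _ (hle (toFinset_mem_flag hℓ)) with h | h
    · exact h
    · exact (hτmax ν hνK h).le
  have hcard : ν.card ≤ ℓ.length := (card_le_card hντ).trans (List.toFinset_card_le ℓ)
  have hpos : 1 ≤ ν.card := card_pos.2 (nonempty_iff_ne_empty.2 hν₀)
  have hpre := prefixSet_mem_prefixFlag (ℓ := ℓ) hpos hcard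
  have hcomp : prefixSet ℓ ν.card = ν := by
    rcases hch _ (hle hpre) ν hν with h | h
    · exact eq_of_subset_of_card_le h (card_prefixSet hn hcard).ge
    · exact (eq_of_subset_of_card_le h (card_prefixSet hn hcard).le).symm
  exact hcomp ▸ hpre

end Facets

section Words

open Finset

variable {S : RelCplx V} {ℓ : List V} {c : Finset (Finset V)}

noncomputable def RelCplx.words (S : RelCplx V) : Finset (List V) :=
  S.facets.biUnion fun τ => τ.toList.permutations.toFinset

theorem RelCplx.mem_words : ℓ ∈ S.words ↔ ℓ.Nodup ∧ ℓ.toFinset ∈ S.facets := by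
  simp only [RelCplx.words, mem_biUnion, List.mem_toFinset, List.mem_permutations]
  constructor
  · rintro ⟨τ, hτ, hperm⟩
    rw [List.toFinset_eq_of_perm _ _ hperm, toList_toFinset]
    exact ⟨hperm.nodup_iff.2 τ.nodup_toList, hτ⟩
  · rintro ⟨hn, hτ⟩
    exact ⟨_, hτ, List.perm_of_nodup_nodup_toFinset_eq hn (nodup_toList _) (by simp)⟩

theorem ne_nil_of_mem_words {v : V} (hv : {v} ∈ S.K) (hℓ : ℓ ∈ S.words) : ℓ ≠ [] := by
  rintro rfl
  exact ne_empty_of_mem_facets hv (RelCplx.mem_words.1 hℓ).2 rfl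

theorem flag_mem_sd (hS : S.IsValid) (hℓ : ℓ ∈ S.words) : flag ℓ ∈ sd S.K := by
  obtain ⟨hn, hτ⟩ := RelCplx.mem_words.1 hℓ
  refine prefixFlag_mem_sd hS.1 le_rfl ?_
  rw [prefixSet_length]
  exact (RelCplx.mem_facets.1 hτ).1

theorem exists_mem_words_subset_flag (hS : S.IsValid) (hc : c ∈ sd S.K) (hcL : c ∉ sd S.L) :
    ∃ ℓ ∈ S.words, c ⊆ flag ℓ := by
  obtain ⟨hK, hne, hch⟩ := mem_sd.1 hc
  have htop : ∃ s ∈ S.K, s ∉ S.L ∧ ∀ t ∈ c, t ⊆ s := by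
    rcases c.eq_empty_or_nonempty with rfl | hc₀
    · have hL : S.L = ∅ := by_contra fun hL => hcL (empty_mem_sd hL)
      obtain ⟨s, hs⟩ := nonempty_iff_ne_empty.2 hK
      exact ⟨s, hs, by simp [hL], by simp⟩
    obtain ⟨s, hs, hmax⟩ := exists_greatest_of_isChain hc₀ hch
    refine ⟨s, (hne s hs).1, fun hsL => hcL (mem_sd.2 ⟨ne_empty_of_mem hsL, ?_, hch⟩), hmax⟩
    exact fun t ht => ⟨hS.2.1 s hsL t (hmax t ht), (hne t ht).2⟩
  obtain ⟨s, hsK, hsL, hmax⟩ := htop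
  obtain ⟨τ, hτ, hsτ⟩ := hS.exists_facet_superset hsK hsL
  obtain ⟨ℓ, hn, rfl, hsub⟩ :=
    exists_nodup_flag_superset τ (fun t ht => ⟨(hmax t ht).trans hsτ, (hne t ht).2⟩) hch
  exact ⟨ℓ, RelCplx.mem_words.2 ⟨hn, hτ⟩, hsub⟩

end Words

section Descents

open Finset

theorem exists_descent_of_mem_of_lt {α : Type*} [LinearOrder α] {a x : α} {l : List α}
    (hx : x ∈ l) (hxa : x < a) :
    ∃ pre c e r, a :: l = pre ++ c :: e :: r ∧ e < c ∧ x ∉ pre ++ [c] := by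
  induction l generalizing a with
  | nil => simp at hx
  | cons y l ih =>
    by_cases hya : y < a
    · exact ⟨[], a, y, l, rfl, hya, by simpa using hxa.ne⟩
    have hxy : x ≠ y := fun h => hya (h ▸ hxa)
    obtain ⟨pre, c, e, r, hl, hec, hxpre⟩ :=
      ih (List.mem_of_ne_of_mem hxy hx) (hxa.trans_le (not_lt.1 hya))
    refine ⟨a :: pre, c, e, r, by rw [hl]; rfl, hec, ?_⟩
    simpa [hxa.ne] using hxpre

variable [LinearOrder V] {ℓ ℓ' : List V}

theorem exists_descent_of_lt (hlt : ℓ' < ℓ) (hn : ℓ.Nodup) (hn' : ℓ'.Nodup)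
    (ht : ℓ'.toFinset = ℓ.toFinset) :
    ∃ pre c e r, ℓ = pre ++ c :: e :: r ∧ e < c ∧
      prefixSet ℓ (pre.length + 1) ≠ prefixSet ℓ' (pre.length + 1) := by
  replace hlt : List.Lex (· < ·) ℓ' ℓ := hlt
  induction hlt with
  | nil => exact absurd ht.symm (by simp)
  | @rel a' l' a l h =>
    have hmem : a' ∈ l := by
      have : a' ∈ (a :: l).toFinset := ht ▸ List.mem_toFinset.2 List.mem_cons_self
      exact List.mem_of_ne_of_mem h.ne (List.mem_toFinset.1 this)
    obtain ⟨pre, c, e, r, hl, hec, hnot⟩ := exists_descent_of_mem_of_lt hmem h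
    refine ⟨pre, c, e, r, hl, hec, fun heq => hnot ?_⟩
    have : a' ∈ prefixSet (a' :: l') (pre.length + 1) := by simp [prefixSet_cons_succ]
    rwa [← heq, hl, prefixSet_append_cons_length, List.mem_toFinset] at this
  | @cons a l' l _ ih =>
    rw [List.nodup_cons] at hn hn'
    have ht' : l'.toFinset = l.toFinset := by
      simp only [List.toFinset_cons] at ht
      rw [← erase_insert (List.mem_toFinset.not.2 hn'.1), ht,
        erase_insert (List.mem_toFinset.not.2 hn.1)]
    obtain ⟨pre, c, e, r, hl, hec, hne⟩ := ih hn.2 hn'.2 ht'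
    refine ⟨a :: pre, c, e, r, by rw [hl]; rfl, hec, fun heq => hne ?_⟩
    rw [List.length_cons, prefixSet_cons_succ, prefixSet_cons_succ] at heq
    have ha : ∀ {l : List V} {k}, a ∉ l → a ∉ prefixSet l k := fun h h' =>
      h (List.mem_toFinset.1 (prefixSet_subset_toFinset h'))
    rw [← erase_insert (ha hn.1), heq, erase_insert (ha hn'.1)]

theorem exists_descent_not_mem_flag_of_lt (hlt : ℓ' < ℓ) (hn : ℓ.Nodup) (hn' : ℓ'.Nodup)
    (ht : ℓ'.toFinset = ℓ.toFinset) :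
    ∃ pre c e r, ℓ = pre ++ c :: e :: r ∧ e < c ∧ prefixSet ℓ (pre.length + 1) ∉ flag ℓ' := by
  obtain ⟨pre, c, e, r, hℓ, hec, hne⟩ := exists_descent_of_lt hlt hn hn' ht
  refine ⟨pre, c, e, r, hℓ, hec, fun hmem => hne ?_⟩
  have hcard := card_prefixSet hn (k := pre.length + 1) (by rw [hℓ]; simp)
  have := ((mem_flag_iff hn').1 hmem).2.2
  rwa [hcard, eq_comm] at this

/-- Every face of `d` contains `v`, which a descent before the position of `v` leaves out. -/
theorem exists_descent_not_mem_of_head {v : V} {d : Finset (Finset V)} (hv : IsBot v)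
    (hn' : ℓ'.Nodup) (h' : ℓ'.head? = some v) (h : ℓ.head? ≠ some v) (hd : d ⊆ flag ℓ)
    (hd' : d ⊆ flag ℓ') (hne : d.Nonempty) :
    ∃ pre c e r, ℓ = pre ++ c :: e :: r ∧ e < c ∧ prefixSet ℓ (pre.length + 1) ∉ d := by
  obtain ⟨t', rfl⟩ : ∃ t', ℓ' = v :: t' := by cases ℓ' <;> simp_all
  have hvd : ∀ s ∈ d, v ∈ s := fun s hs => by
    obtain ⟨h1, -, h3⟩ := (mem_flag_iff hn').1 (hd' hs)
    obtain ⟨k, hk⟩ := Nat.exists_eq_add_of_le' h1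
    rw [← h3, hk, prefixSet_cons_succ]
    exact mem_insert_self _ _
  obtain ⟨s, hs⟩ := hne
  have hvℓ : v ∈ ℓ := List.mem_toFinset.1 (subset_toFinset_of_mem_flag (hd hs) (hvd s hs))
  obtain ⟨a, l, rfl⟩ : ∃ a l, ℓ = a :: l := by cases ℓ <;> simp_all
  have hav : a ≠ v := by simpa using h
  obtain ⟨pre, c, e, r, hl, hec, hnot⟩ :=
    exists_descent_of_mem_of_lt (List.mem_of_ne_of_mem hav.symm hvℓ) ((hv a).lt_of_ne' hav)
  refine ⟨pre, c, e, r, hl, hec, fun hP => hnot ?_⟩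
  have := hvd _ hP
  rwa [hl, prefixSet_append_cons_length, List.mem_toFinset] at this

end Descents

section MorseTiles

open Finset

variable {σ μ d : Finset W} {Y R : Finset (Finset W)}

theorem mem_below : d ∈ below σ R ↔ d ⊆ σ ∧ ∃ ρ ∈ R, d ⊆ ρ := by
  simp [below]

theorem mem_ridges_of_card (hd : d ⊆ σ) (hc : d.card + 1 = σ.card) : d ∈ ridges σ := by
  obtain ⟨x, hx⟩ : (σ \ d).Nonempty := by
    rw [← card_pos, card_sdiff_of_subset hd]
    omega
  rw [mem_sdiff] at hx
  refine mem_image.2 ⟨x, hx.1, (eq_of_subset_of_card_le (fun y hy => ?_) ?_).symm⟩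
  · exact mem_erase.2 ⟨fun h => hx.2 (h ▸ hy), hd hy⟩
  · rw [card_erase_of_mem hx.1]
    omega

theorem isMorseTile_of_forall_subset_ridge_or_subset (hσ : σ.Nonempty) (hYσ : ∀ d ∈ Y, d ⊂ σ)
    (hY : IsComplex Y) (hμ : Y.Nonempty → μ ∈ Y)
    (hcov : ∀ d ∈ Y, (∃ ρ ∈ Y, ρ ∈ ridges σ ∧ d ⊆ ρ) ∨ d ⊆ μ) :
    ∃ n k, IsMorseTile ⟨σ.powerset, Y⟩ n k := by
  set R := (ridges σ).filter (· ∈ Y)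
  have hRY : below σ R ⊆ Y := fun d hd => by
    obtain ⟨-, ρ, hρ, hdρ⟩ := mem_below.1 hd
    exact hY ρ (mem_filter.1 hρ).2 d hdρ
  refine ⟨σ.card - 1, R.card, σ, by have := hσ.card_pos; omega, rfl, R, filter_subset _ _, rfl, ?_⟩
  rcases Y.eq_empty_or_nonempty with rfl | hne
  · exact Or.inl (subset_empty.1 hRY).symm
  have hμY := hμ hne
  have hYsub : Y ⊆ below σ R ∪ below σ {μ} := fun d hd => by
    rcases hcov d hd with ⟨ρ, hρY, hρ, hdρ⟩ | hdμ
    · exact mem_union_left _ (mem_below.2 ⟨(hYσ d hd).subset, ρ, mem_filter.2 ⟨hρ, hρY⟩, hdρ⟩)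
    · exact mem_union_right _ (mem_below.2 ⟨(hYσ d hd).subset, μ, mem_singleton_self _, hdμ⟩)
  have hμsub : below σ {μ} ⊆ Y := fun d hd => by
    obtain ⟨-, ρ, hρ, hdρ⟩ := mem_below.1 hd
    exact hY μ hμY d (mem_singleton.1 hρ ▸ hdρ)
  by_cases hμR : μ ∈ below σ R
  · refine Or.inl (hRY.antisymm' (hYsub.trans (union_subset subset_rfl fun d hd => ?_)))
    obtain ⟨hdσ, ρ, hρ, hdρ⟩ := mem_below.1 hd
    obtain ⟨-, ρ', hρ', hμρ'⟩ := mem_below.1 hμR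
    exact mem_below.2 ⟨hdσ, ρ', hρ', (mem_singleton.1 hρ ▸ hdρ).trans hμρ'⟩
  refine Or.inr ⟨μ, (hYσ μ hμY).subset, hμR, ?_, (union_subset hRY hμsub).antisymm' hYsub⟩
  have hlt := card_lt_card (hYσ μ hμY)
  by_contra hcard
  refine hμR (mem_below.2 ⟨(hYσ μ hμY).subset, μ, mem_filter.2 ⟨?_, hμY⟩, subset_rfl⟩)
  exact mem_ridges_of_card (hYσ μ hμY).subset (by omega)

end MorseTiles

section Enumeration

open Finset

variable {v : V} {ℓ ℓ' : List V}

def phase (v : V) (ℓ : List V) : ℕ := if ℓ.head? = some v then 0 else 1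

theorem phase_eq_zero_iff : phase v ℓ = 0 ↔ ℓ.head? = some v := by
  unfold phase; split_ifs with h <;> simp [h]

theorem phase_le_one (v : V) (ℓ : List V) : phase v ℓ ≤ 1 := by
  unfold phase; split_ifs <;> omega

theorem phase_eq_zero_iff_singleton_mem_flag (h : ℓ.Nodup) : phase v ℓ = 0 ↔ {v} ∈ flag ℓ := by
  rw [phase_eq_zero_iff, singleton_mem_flag_iff h]

/-- Any order on the facets would do: the middle component only groups the words by facet. -/
def wordKey (v : V) (ℓ : List V) : ℕ ×ₗ Colex (Finset V) ×ₗ List V :=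
  toLex (phase v ℓ, toLex (toColex ℓ.toFinset, ℓ))

theorem wordKey_injective (v : V) : Function.Injective (wordKey v) := fun _ _ h =>
  congrArg (fun k => (ofLex (ofLex k).2).2) h

variable [LinearOrder V]

theorem phase_le_of_wordKey_le (h : wordKey v ℓ' ≤ wordKey v ℓ) : phase v ℓ' ≤ phase v ℓ :=
  Prod.Lex.monotone_fst _ _ h

theorem lt_of_phase_lt (hv : IsBot v) (ht : ℓ'.toFinset = ℓ.toFinset)
    (hlt : phase v ℓ' < phase v ℓ) : ℓ' < ℓ := by
  have h0 : ℓ'.head? = some v := phase_eq_zero_iff.1 (by have := phase_le_one v ℓ; omega)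
  have h1 : ℓ.head? ≠ some v := fun h => by rw [phase_eq_zero_iff.2 h] at hlt; omega
  obtain ⟨t', rfl⟩ : ∃ t', ℓ' = v :: t' := by cases ℓ' <;> simp_all
  obtain ⟨a, t, rfl⟩ : ∃ a t, ℓ = a :: t := by cases ℓ <;> simp_all
  exact List.Lex.rel ((hv a).lt_of_ne' (by simpa using h1))

/-- As `v` is least, the words of a facet starting with `v` are its lexicographically first. -/
theorem wordKey_lt_wordKey_iff (hv : IsBot v) (ht : ℓ'.toFinset = ℓ.toFinset) :
    wordKey v ℓ' < wordKey v ℓ ↔ ℓ' < ℓ := by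
  simp only [wordKey, Prod.Lex.toLex_lt_toLex, ht, lt_self_iff_false, false_or, true_and]
  refine ⟨fun h => h.elim (lt_of_phase_lt hv ht) And.right, fun h => ?_⟩
  rcases lt_trichotomy (phase v ℓ') (phase v ℓ) with hp | hp | hp
  · exact Or.inl hp
  · exact Or.inr ⟨hp, h⟩
  · exact ((lt_of_phase_lt hv ht.symm hp).asymm h).elim

theorem toColex_lt_of_wordKey_lt (h : wordKey v ℓ' < wordKey v ℓ) (hph : phase v ℓ' = phase v ℓ)
    (ht : ℓ'.toFinset ≠ ℓ.toFinset) : toColex ℓ'.toFinset < toColex ℓ.toFinset := by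
  simp only [wordKey, Prod.Lex.toLex_lt_toLex, hph, lt_self_iff_false, true_and, false_or] at h
  exact h.resolve_right fun h => ht (toColex_inj.1 h.1)

theorem wordKey_lt_of_phase_le (hph : phase v ℓ' ≤ phase v ℓ)
    (hc : toColex ℓ'.toFinset < toColex ℓ.toFinset) : wordKey v ℓ' < wordKey v ℓ := by
  simp only [wordKey, Prod.Lex.toLex_lt_toLex]
  rcases hph.lt_or_eq with hph | hph
  exacts [Or.inl hph, Or.inr ⟨hph, Or.inl hc⟩]

end Enumeration

section Tiles

open Finset

variable [LinearOrder V] {S : RelCplx V} {v : V} {ℓ : List V} {d : Finset (Finset V)} {m p : ℕ}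

noncomputable def RelCplx.wordKeys (S : RelCplx V) (v : V) :
    Finset (ℕ ×ₗ Colex (Finset V) ×ₗ List V) :=
  S.words.image (wordKey v)

/-- The `i`-th word for `wordKey`, read off the last component of the `i`-th key. -/
noncomputable def RelCplx.word (S : RelCplx V) (v : V) (i : Fin (S.wordKeys v).card) : List V :=
  (ofLex (ofLex ((S.wordKeys v).orderEmbOfFin rfl i)).2).2

theorem wordKey_word (i : Fin (S.wordKeys v).card) :
    wordKey v (S.word v i) = (S.wordKeys v).orderEmbOfFin rfl i := by
  obtain ⟨ℓ, -, h⟩ := mem_image.1 ((S.wordKeys v).orderEmbOfFin_mem rfl i)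
  rw [RelCplx.word, ← h]
  rfl

theorem word_mem_words (i : Fin (S.wordKeys v).card) : S.word v i ∈ S.words := by
  obtain ⟨ℓ, hℓ, h⟩ := mem_image.1 ((S.wordKeys v).orderEmbOfFin_mem rfl i)
  rw [RelCplx.word, ← h]
  exact hℓ

theorem strictMono_wordKey_word : StrictMono fun i => wordKey v (S.word v i) := by
  simpa only [wordKey_word] using ((S.wordKeys v).orderEmbOfFin rfl).strictMono

theorem exists_word_eq (hℓ : ℓ ∈ S.words) : ∃ i, S.word v i = ℓ := by
  have : wordKey v ℓ ∈ Set.range ((S.wordKeys v).orderEmbOfFin rfl) := by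
    rw [range_orderEmbOfFin]
    exact mem_image_of_mem _ hℓ
  obtain ⟨i, hi⟩ := this
  exact ⟨i, wordKey_injective v (by rw [wordKey_word, hi])⟩

theorem exists_lt_word_eq {i : Fin (S.wordKeys v).card} (hℓ : ℓ ∈ S.words)
    (hlt : wordKey v ℓ < wordKey v (S.word v i)) : ∃ j < i, S.word v j = ℓ := by
  obtain ⟨j, rfl⟩ := exists_word_eq (v := v) hℓ
  exact ⟨j, strictMono_wordKey_word.lt_iff_lt.1 hlt, rfl⟩

noncomputable def RelCplx.covered (S : RelCplx V) (v : V) (p : ℕ) : Finset (Finset (Finset V)) :=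
  sd S.L ∪ (univ.filter fun j : Fin (S.wordKeys v).card => (j : ℕ) < p).biUnion
    fun j => (flag (S.word v j)).powerset

noncomputable def RelCplx.tile (S : RelCplx V) (v : V) (i : Fin (S.wordKeys v).card) :
    RelCplx (Finset V) :=
  ⟨(flag (S.word v i)).powerset, (flag (S.word v i)).powerset.filter (· ∈ S.covered v i)⟩

noncomputable def RelCplx.morseFace (S : RelCplx V) (v : V) (i : Fin (S.wordKeys v).card) :
    Finset (Finset V) :=
  prefixFlag (S.word v i) (Nat.findGreatest (fun m => prefixFlag (S.word v i) m ∈ S.covered v i)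
    ((S.word v i).length - 1))

theorem mem_covered : d ∈ S.covered v p ↔
    d ∈ sd S.L ∨ ∃ j : Fin (S.wordKeys v).card, (j : ℕ) < p ∧ d ⊆ flag (S.word v j) := by
  simp [RelCplx.covered]

theorem isComplex_covered : IsComplex (S.covered v p) := by
  intro d hd d' hd'
  rcases mem_covered.1 hd with h | ⟨j, hj, h⟩
  · exact mem_covered.2 (Or.inl (isComplex_sd _ d h d' hd'))
  · exact mem_covered.2 (Or.inr ⟨j, hj, hd'.trans h⟩)

theorem mem_tile_faces {i : Fin (S.wordKeys v).card} :
    d ∈ (S.tile v i).faces ↔ d ⊆ flag (S.word v i) ∧ d ∉ S.covered v i := by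
  simp +contextual [RelCplx.faces, RelCplx.tile]

theorem mem_tile_L {i : Fin (S.wordKeys v).card} :
    d ∈ (S.tile v i).L ↔ d ⊆ flag (S.word v i) ∧ d ∈ S.covered v i := by
  simp [RelCplx.tile]

theorem subset_morseFace {i : Fin (S.wordKeys v).card} (hm : m < (S.word v i).length)
    (h : prefixFlag (S.word v i) m ∈ S.covered v i) :
    prefixFlag (S.word v i) m ⊆ S.morseFace v i :=
  prefixFlag_mono (Nat.le_findGreatest (by omega) h)

theorem morseFace_mem_tile_L {i : Fin (S.wordKeys v).card} (hne : (S.tile v i).L.Nonempty) :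
    S.morseFace v i ∈ (S.tile v i).L := by
  obtain ⟨d, hd⟩ := hne
  have h₀ : prefixFlag (S.word v i) 0 ∈ S.covered v i :=
    prefixFlag_zero (ℓ := S.word v i) ▸ isComplex_covered d (mem_tile_L.1 hd).2 ∅ (empty_subset _)
  exact mem_tile_L.2 ⟨prefixFlag_subset_flag ((Nat.findGreatest_le _).trans (Nat.sub_le _ _)),
    Nat.findGreatest_spec (P := fun m => prefixFlag (S.word v i) m ∈ S.covered v i)
      (Nat.zero_le _) h₀⟩

end Tiles

section TileShapes

open Finset

variable [LinearOrder V] {S : RelCplx V} {v : V} {d : Finset (Finset V)}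
  {i j : Fin (S.wordKeys v).card}

theorem exists_ridge_of_descent (hvbot : IsBot v) {pre r : List V} {c e : V}
    (hℓ : S.word v i = pre ++ c :: e :: r) (hec : e < c) (hd : d ⊆ flag (S.word v i))
    (hnot : prefixSet (S.word v i) (pre.length + 1) ∉ d) :
    ∃ ρ ∈ (S.tile v i).L, ρ ∈ ridges (flag (S.word v i)) ∧ d ⊆ ρ := by
  obtain ⟨hn, hτ⟩ := RelCplx.mem_words.1 (word_mem_words (v := v) i)
  have hperm : (pre ++ e :: c :: r).Perm (S.word v i) :=
    hℓ ▸ List.Perm.append_left pre (List.Perm.swap c e r)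
  have ht := List.toFinset_eq_of_perm _ _ hperm
  have hmem : pre ++ e :: c :: r ∈ S.words :=
    RelCplx.mem_words.2 ⟨hperm.nodup_iff.2 hn, ht ▸ hτ⟩
  have hlt : pre ++ e :: c :: r < S.word v i := hℓ ▸ List.Lex.append_left _ (List.Lex.rel hec) pre
  obtain ⟨j, hj, hjw⟩ := exists_lt_word_eq hmem ((wordKey_lt_wordKey_iff hvbot ht).2 hlt)
  refine ⟨(flag (S.word v i)).erase (prefixSet (S.word v i) (pre.length + 1)),
    mem_tile_L.2 ⟨erase_subset _ _, mem_covered.2 (Or.inr ⟨j, hj, ?_⟩)⟩, ?_, ?_⟩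
  · rw [hjw, hℓ]
    exact flag_erase_subset_flag_swap pre r c e
  · exact mem_image_of_mem _ (prefixSet_mem_prefixFlag (by omega) (by rw [hℓ]; simp))
  · exact fun s hs => mem_erase.2 ⟨fun h => hnot (h ▸ hs), hd hs⟩

theorem flag_word_not_mem_covered (hv : {v} ∈ S.K) (hvbot : IsBot v) :
    flag (S.word v i) ∉ S.covered v i := by
  obtain ⟨hn, hτ⟩ := RelCplx.mem_words.1 (word_mem_words (v := v) i)
  have htop := toFinset_mem_flag (ne_nil_of_mem_words hv (word_mem_words (v := v) i))
  intro h
  rcases mem_covered.1 h with hL | ⟨j, hj, hsub⟩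
  · exact (RelCplx.mem_facets.1 hτ).2.1 ((mem_sd.1 hL).2.1 _ htop).1
  obtain ⟨hn', hτ'⟩ := RelCplx.mem_words.1 (word_mem_words (v := v) j)
  have ht : (S.word v j).toFinset = (S.word v i).toFinset :=
    (RelCplx.mem_facets.1 hτ).2.2 _ (RelCplx.mem_facets.1 hτ').1
      (subset_toFinset_of_mem_flag (hsub htop))
  obtain ⟨pre, c, e, r, hℓ, -, hnot⟩ := exists_descent_not_mem_flag_of_lt
    ((wordKey_lt_wordKey_iff hvbot ht).1 (strictMono_wordKey_word hj)) hn hn' ht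
  exact hnot (hsub (prefixSet_mem_prefixFlag (by omega) (by rw [hℓ]; simp)))

theorem subset_morseFace_of_mem_sd (hS : S.IsValid) (hd : d ⊆ flag (S.word v i))
    (hL : d ∈ sd S.L) : d ⊆ S.morseFace v i := by
  obtain ⟨hn, hτ⟩ := RelCplx.mem_words.1 (word_mem_words (v := v) i)
  rcases d.eq_empty_or_nonempty with rfl | hne
  · exact empty_subset _
  have htop := prefixSet_sup_card_mem hn hd hne
  have htopL : prefixSet (S.word v i) (d.sup card) ∈ S.L := ((mem_sd.1 hL).2.1 _ htop).1
  have hm : d.sup card < (S.word v i).length := by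
    refine (Finset.sup_le fun s hs => ((mem_flag_iff hn).1 (hd hs)).2.1).lt_of_ne fun heq => ?_
    rw [heq, prefixSet_length] at htopL
    exact (RelCplx.mem_facets.1 hτ).2.1 htopL
  exact (subset_prefixFlag_sup_card hn hd).trans
    (subset_morseFace hm (mem_covered.2 (Or.inl (prefixFlag_mem_sd hS.2.1 hm.le htopL))))

/-- The initial segment of the flag up to `d` extends to a full flag of the other facet, which is
enumerated earlier still. -/
theorem subset_morseFace_of_toFinset_ne (hj : j < i) (hd : d ⊆ flag (S.word v i))
    (hdj : d ⊆ flag (S.word v j)) (ht : (S.word v j).toFinset ≠ (S.word v i).toFinset)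
    (hph : phase v (S.word v j) = phase v (S.word v i)) : d ⊆ S.morseFace v i := by
  obtain ⟨hn, hτ⟩ := RelCplx.mem_words.1 (word_mem_words (v := v) i)
  obtain ⟨hn', hτ'⟩ := RelCplx.mem_words.1 (word_mem_words (v := v) j)
  rcases d.eq_empty_or_nonempty with rfl | hne
  · exact empty_subset _
  have htop := prefixSet_sup_card_mem hn hd hne
  have htopj : prefixSet (S.word v i) (d.sup card) ⊆ (S.word v j).toFinset :=
    subset_toFinset_of_mem_flag (hdj htop)
  have hm : d.sup card < (S.word v i).length := by
    refine (Finset.sup_le fun s hs => ((mem_flag_iff hn).1 (hd hs)).2.1).lt_of_ne fun heq => ht ?_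
    rw [heq, prefixSet_length] at htopj
    exact (RelCplx.mem_facets.1 hτ).2.2 _ (RelCplx.mem_facets.1 hτ').1 htopj
  obtain ⟨ℓ, hn'', ht'', hsub⟩ := exists_nodup_flag_superset (S.word v j).toFinset
    (fun s hs => ⟨(subset_prefixSet_of_mem_prefixFlag hs).trans htopj,
      ne_empty_of_mem_prefixFlag hm.le hs⟩)
    (fun _ ha _ hb => prefixFlag_isChain (ℓ := S.word v i) ha hb)
  have hℓ : ℓ ∈ S.words := RelCplx.mem_words.2 ⟨hn'', ht''.symm ▸ hτ'⟩
  have hphℓ : phase v ℓ ≤ phase v (S.word v i) := by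
    obtain h | h := Nat.le_one_iff_eq_zero_or_eq_one.1 (phase_le_one v (S.word v i))
    · have hm1 : 1 ≤ d.sup card := card_prefixSet hn hm.le ▸ ((mem_flag_iff hn).1 (hd htop)).1
      rw [h, Nat.le_zero, phase_eq_zero_iff_singleton_mem_flag hn'']
      exact hsub (mem_prefixFlag_of_mem_flag hn ((phase_eq_zero_iff_singleton_mem_flag hn).1 h)
        (by simpa using hm1))
    · exact h ▸ phase_le_one v ℓ
  have hkey : wordKey v ℓ < wordKey v (S.word v i) := wordKey_lt_of_phase_le hphℓ
    (ht'' ▸ toColex_lt_of_wordKey_lt (strictMono_wordKey_word hj) hph ht)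
  obtain ⟨j', hj', rfl⟩ := exists_lt_word_eq hℓ hkey
  exact (subset_prefixFlag_sup_card hn hd).trans
    (subset_morseFace hm (mem_covered.2 (Or.inr ⟨j', hj', hsub⟩)))

end TileShapes

section Shelling

open Finset

variable [LinearOrder V] {S : RelCplx V} {v : V} {d : Finset (Finset V)}

theorem isMorseTile_tile (hS : S.IsValid) (hv : {v} ∈ S.K) (hvbot : IsBot v)
    (i : Fin (S.wordKeys v).card) : ∃ n k, IsMorseTile (S.tile v i) n k := by
  obtain ⟨hn, -⟩ := RelCplx.mem_words.1 (word_mem_words (v := v) i)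
  refine isMorseTile_of_forall_subset_ridge_or_subset
    ⟨_, toFinset_mem_flag (ne_nil_of_mem_words hv (word_mem_words (v := v) i))⟩
    (fun d hd => ?_) (fun d hd d' hd' => ?_) morseFace_mem_tile_L (fun d hd => ?_) <;>
  obtain ⟨hdσ, hdX⟩ := mem_tile_L.1 hd
  · exact hdσ.ssubset_of_ne fun h => flag_word_not_mem_covered hv hvbot (h ▸ hdX)
  · exact mem_tile_L.2 ⟨hd'.trans hdσ, isComplex_covered d hdX d' hd'⟩
  rcases mem_covered.1 hdX with hL | ⟨j, hj, hdj⟩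
  · exact Or.inr (subset_morseFace_of_mem_sd hS hdσ hL)
  obtain ⟨hn', -⟩ := RelCplx.mem_words.1 (word_mem_words (v := v) j)
  have hkey := strictMono_wordKey_word (S := S) (v := v) hj
  by_cases ht : (S.word v j).toFinset = (S.word v i).toFinset
  · obtain ⟨pre, c, e, r, hℓ, hec, hnot⟩ := exists_descent_not_mem_flag_of_lt
      ((wordKey_lt_wordKey_iff hvbot ht).1 hkey) hn hn' ht
    exact Or.inl (exists_ridge_of_descent hvbot hℓ hec hdσ fun h => hnot (hdj h))
  by_cases hph : phase v (S.word v j) = phase v (S.word v i)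
  · exact Or.inr (subset_morseFace_of_toFinset_ne hj hdσ hdj ht hph)
  rcases d.eq_empty_or_nonempty with rfl | hne
  · exact Or.inr (empty_subset _)
  -- the earlier word starts with `v`, the current one does not
  have hle := phase_le_of_wordKey_le hkey.le
  have hi1 := phase_le_one v (S.word v i)
  obtain ⟨pre, c, e, r, hℓ, hec, hnot⟩ := exists_descent_not_mem_of_head hvbot hn'
    (phase_eq_zero_iff.1 (by omega)) (fun h => by rw [phase_eq_zero_iff.2 h] at hph hle; omega)
    hdσ hdj hne
  exact Or.inl (exists_ridge_of_descent hvbot hℓ hec hdσ hnot)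

theorem exists_tile_of_subset_flag (hdL : d ∉ sd S.L) {j : Fin (S.wordKeys v).card}
    (hd : d ⊆ flag (S.word v j)) : ∃ i ≤ j, d ∈ (S.tile v i).faces := by
  obtain ⟨i, hi, hmin⟩ :=
    (univ.filter fun i => d ⊆ flag (S.word v i)).exists_min_image id ⟨j, by simpa using hd⟩
  rw [mem_filter] at hi
  refine ⟨i, hmin j (by simpa using hd), mem_tile_faces.2 ⟨hi.2, fun hX => ?_⟩⟩
  rcases mem_covered.1 hX with hL | ⟨k, hk, hdk⟩
  · exact hdL hL
  · exact (hmin k (by simpa using hdk)).not_gt hk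

theorem biUnion_tile_faces (p : ℕ) :
    ((univ.filter fun i : Fin (S.wordKeys v).card => (i : ℕ) < p).biUnion
      fun i => (S.tile v i).faces) = S.covered v p \ sd S.L := by
  ext d
  simp only [mem_biUnion, mem_filter, mem_univ, true_and, mem_sdiff]
  constructor
  · rintro ⟨i, hi, hd⟩
    obtain ⟨hdσ, hdX⟩ := mem_tile_faces.1 hd
    exact ⟨mem_covered.2 (Or.inr ⟨i, hi, hdσ⟩), fun hL => hdX (mem_covered.2 (Or.inl hL))⟩
  · rintro ⟨hX, hdL⟩
    obtain ⟨j, hj, hdj⟩ := (mem_covered.1 hX).resolve_left hdL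
    obtain ⟨i, hij, hi⟩ := exists_tile_of_subset_flag hdL hdj
    exact ⟨i, lt_of_le_of_lt hij hj, hi⟩

theorem covered_card_sdiff (hS : S.IsValid) :
    S.covered v (S.wordKeys v).card \ sd S.L = sd S.K \ sd S.L := by
  ext d
  simp only [mem_sdiff, and_congr_left_iff]
  intro hdL
  constructor
  · intro hX
    obtain ⟨j, -, hdj⟩ := (mem_covered.1 hX).resolve_left hdL
    exact isComplex_sd _ _ (flag_mem_sd hS (word_mem_words (v := v) j)) d hdj
  · intro hK
    obtain ⟨ℓ, hℓ, hsub⟩ := exists_mem_words_subset_flag hS hK hdL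
    obtain ⟨j, rfl⟩ := exists_word_eq (v := v) hℓ
    exact mem_covered.2 (Or.inr ⟨j, j.2, hsub⟩)

noncomputable def RelCplx.sdTiling (S : RelCplx V) (hS : S.IsValid) (v : V) :
    Tiling S.sdR (S.wordKeys v).card where
  tile := S.tile v
  isFacet i := by
    obtain ⟨hn, hτ⟩ := RelCplx.mem_words.1 (word_mem_words (v := v) i)
    exact ⟨flag (S.word v i), flag_mem_sd hS (word_mem_words i),
      fun _ he hle => flag_maximal hn hτ he hle, rfl⟩
  subL _ := filter_subset _ _
  disj i j hij := by
    refine disjoint_left.2 fun d hdi hdj => ?_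
    rw [mem_tile_faces] at hdi hdj
    rcases lt_or_gt_of_ne hij with h | h
    · exact hdj.2 (mem_covered.2 (Or.inr ⟨i, h, hdi.1⟩))
    · exact hdi.2 (mem_covered.2 (Or.inr ⟨j, h, hdj.1⟩))
  cover := by
    change _ = sd S.K \ sd S.L
    rw [← covered_card_sdiff (v := v) hS, ← biUnion_tile_faces]
    simp

theorem isMorse_sdTiling (hS : S.IsValid) (hv : {v} ∈ S.K) (hvbot : IsBot v) :
    (S.sdTiling hS v).IsMorse :=
  isMorseTile_tile hS hv hvbot

theorem isShelling_sdTiling (hS : S.IsValid) : (S.sdTiling hS v).IsShelling := by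
  intro p _
  change IsComplex (sd S.L ∪ (univ.filter fun i : Fin _ => (i : ℕ) < p).biUnion
    fun i => (S.tile v i).faces)
  rw [biUnion_tile_faces,
    union_sdiff_of_subset (show sd S.L ⊆ S.covered v p from subset_union_left)]
  exact isComplex_covered

end Shelling

section DerivedNeighborhood

open Finset

variable {S : RelCplx V} {v : V} {d : Finset (Finset V)}

theorem mem_relDerivedNbhd_closedT_singleton :
    d ∈ relDerivedNbhd (closedT {v}) S ↔ insert {v} d ∈ sd S.K ∧ d ∉ sd S.L := by
  have hsupp : suppK (closedT ({v} : Finset V)) = {v} :=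
    (Finset.sup_le fun _ hs => mem_powerset.1 hs).antisymm
      (le_sup (f := id) (mem_powerset_self _))
  simp only [relDerivedNbhd, hsupp, singleton_biUnion, RelCplx.starR, RelCplx.faces, star,
    mem_inter, mem_sdiff, mem_filter]
  simp only [RelCplx.sdR, ← insert_eq]
  have hdown : insert {v} d ∈ sd S.K → d ∈ sd S.K := fun h =>
    isComplex_sd _ _ h _ (subset_insert _ _)
  tauto

variable [LinearOrder V] {p : ℕ}

theorem covered_sdiff_eq_relDerivedNbhd (hS : S.IsValid)
    (hp : ∀ i : Fin (S.wordKeys v).card, (i : ℕ) < p ↔ phase v (S.word v i) = 0) :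
    S.covered v p \ sd S.L = relDerivedNbhd (closedT {v}) S := by
  ext d
  rw [mem_sdiff, mem_relDerivedNbhd_closedT_singleton, and_congr_left_iff]
  intro hdL
  constructor
  · intro hX
    obtain ⟨j, hj, hdj⟩ := (mem_covered.1 hX).resolve_left hdL
    obtain ⟨hn, -⟩ := RelCplx.mem_words.1 (word_mem_words (v := v) j)
    have hvj := (phase_eq_zero_iff_singleton_mem_flag hn).1 ((hp j).1 hj)
    exact isComplex_sd _ _ (flag_mem_sd hS (word_mem_words j)) _ (insert_subset hvj hdj)
  · intro hK
    have hL : insert {v} d ∉ sd S.L := fun h => hdL (isComplex_sd _ _ h _ (subset_insert _ _))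
    obtain ⟨ℓ, hℓ, hsub⟩ := exists_mem_words_subset_flag hS hK hL
    obtain ⟨j, rfl⟩ := exists_word_eq (v := v) hℓ
    obtain ⟨hn, -⟩ := RelCplx.mem_words.1 hℓ
    have hj := (hp j).2 ((phase_eq_zero_iff_singleton_mem_flag hn).2 (hsub (mem_insert_self _ _)))
    exact mem_covered.2 (Or.inr ⟨j, hj, (subset_insert _ _).trans hsub⟩)

theorem exists_forall_lt_iff_phase_eq_zero :
    ∃ p ≤ (S.wordKeys v).card,
      ∀ i : Fin (S.wordKeys v).card, (i : ℕ) < p ↔ phase v (S.word v i) = 0 := by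
  have hlow : IsLowerSet {i : Fin (S.wordKeys v).card | phase v (S.word v i) = 0} :=
    fun i j hji hj => by
      have := phase_le_of_wordKey_le (strictMono_wordKey_word.monotone hji)
      simp_all
  rcases hlow.eq_univ_or_Iio with h | ⟨a, h⟩
  · exact ⟨_, le_rfl, fun i => by simpa [i.2] using (Set.ext_iff.1 h i).symm⟩
  · exact ⟨a, a.2.le, fun i => by simpa using (Set.ext_iff.1 h i).symm⟩

theorem beginsWith_sdTiling (hS : S.IsValid) :
    (S.sdTiling hS v).BeginsWith (relDerivedNbhd (closedT {v}) S) := by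
  obtain ⟨p, hp, hph⟩ := exists_forall_lt_iff_phase_eq_zero (S := S) (v := v)
  exact ⟨p, hp, (biUnion_tile_faces p).trans (covered_sdiff_eq_relDerivedNbhd hS hph)⟩

end DerivedNeighborhood

theorem exists_linearOrder_isBot {α : Type*} (a : α) :
    ∃ r : LinearOrder α, @IsBot α r.toLE a := by
  classical
  let : LinearOrder α := linearOrderOfSTO WellOrderingRel
  refine ⟨LinearOrder.lift' (fun b => toLex (decide (b ≠ a), b)) fun b c h => ?_, fun b => ?_⟩
  · exact congrArg (fun x => (ofLex x).2) h
  · change toLex (decide (a ≠ a), a) ≤ toLex (decide (b ≠ a), b)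
    by_cases hb : b = a
    · simp [hb]
    · exact Prod.Lex.toLex_le_toLex.2 (Or.inl (by simp [hb]))

/-- **Theorem.** Let `S = K \ L` be a finite relative simplicial complex and `v`
a vertex of `K`. Then `sd S` carries a Morse shelling which begins with
`st_{sd S}(v̂) = N(v, S)`, the derived neighborhood of `v` in `S`. -/
theorem morse_shelling_of_sd_beginning_with_star
    {V : Type*} [DecidableEq V] (S : RelCplx V) (hS : S.IsValid)
    (v : V) (hv : {v} ∈ S.K) :
    ∃ (N : ℕ) (Tl : Tiling S.sdR N),
      Tl.IsMorse ∧ Tl.IsShelling ∧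
      Tl.BeginsWith (relDerivedNbhd (closedT {v}) S) := by
  obtain ⟨r, hvbot⟩ := exists_linearOrder_isBot v
  let := r
  exact ⟨_, S.sdTiling hS v, isMorse_sdTiling hS hv hvbot, isShelling_sdTiling hS,
    beginsWith_sdTiling hS⟩

end MorseShelling
end
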